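/- Let {X_t} be a stationary Markov chain on a finite set A = {1,...,n} with transition matrix a_{ij} > 0 for all i, j, and let θ(x_1^l) ∈ S_{n²} be the non-cyclic empirical doublet measure θ_{ij}(x_1^l) = (1/(l−1)) Σ_{t=1}^{l−1} 1{x_t x_{t+1} = ij}. Then {θ(x_1^l)} satisfies the large deviation property with rate function I(θ) = Σ_{i∈A} θ̄_i Σ_{j∈A} b_{ij} log(b_{ij}/a_{ij}) for θ ∈ M_s(A²) (where θ̄_i = Σ_j θ_{ij} and b_{ij} = θ_{ij}/θ̄_i), and I(θ) = +∞ for θ ∈ S_{n²} \ M_s(A²). -/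

import Mathlib

open Finset Filter

/-- The simplex `S_{n²}` of probability distributions on `A²`. -/
def simplex2 (n : ℕ) : Set (Fin n → Fin n → ℝ) :=
  {θ | (∀ i j, 0 ≤ θ i j) ∧ ∑ i, ∑ j, θ i j = 1}

/-- Stationary distributions on `A²`: equal row and column sums. -/
def IsStat2 {n : ℕ} (θ : Fin n → Fin n → ℝ) : Prop :=
  ∀ i, ∑ j, θ i j = ∑ j, θ j i

/-- Marginal of a doublet distribution. -/
def marg {n : ℕ} (θ : Fin n → Fin n → ℝ) : Fin n → ℝ := fun i => ∑ j, θ i j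

/-- The non-cyclic empirical doublet measure
`θ_{ij}(x_1^l) = (1/(l−1)) Σ_{t=1}^{l−1} 1{x_t x_{t+1} = ij}` on paths of length
`l = m+2`. -/
noncomputable def empNC {n m : ℕ} (x : Fin (m+2) → Fin n) : Fin n → Fin n → ℝ :=
  fun i j => (∑ t : Fin (m+1), if x t.castSucc = i ∧ x t.succ = j then (1:ℝ) else 0) / (m+1)

/-- Law of the stationary Markov chain with stationary distribution `π` and transition
matrix `a` on paths of length `k+1`. -/
noncomputable def pathPA {n : ℕ} (π : Fin n → ℝ) (a : Fin n → Fin n → ℝ) {k : ℕ}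
    (x : Fin (k+1) → Fin n) : ℝ :=
  π (x 0) * ∏ t : Fin k, a (x t.castSucc) (x t.succ)

open scoped Classical in
/-- `Pr{θ(x_1^l) ∈ Γ}` over paths of length `l = m+2`. -/
noncomputable def prEventNC {n : ℕ} (π : Fin n → ℝ) (a : Fin n → Fin n → ℝ) (m : ℕ)
    (Γ : Set (Fin n → Fin n → ℝ)) : ℝ :=
  ∑ x : Fin (m+2) → Fin n, if empNC x ∈ Γ then pathPA π a x else 0

/-- Extended-real logarithm, `elog p = −∞` for `p ≤ 0`. -/
noncomputable def elog (p : ℝ) : EReal := if p ≤ 0 then ⊥ else ((Real.log p : ℝ) : EReal)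

open scoped Classical in
/-- The rate function: `I(θ) = Σ_i θ̄_i Σ_j b_{ij} log(b_{ij}/a_{ij})` for stationary
`θ` (with `b_{ij} = θ_{ij}/θ̄_i`), and `I(θ) = +∞` otherwise. -/
noncomputable def rate16 {n : ℕ} (a : Fin n → Fin n → ℝ) (θ : Fin n → Fin n → ℝ) : EReal :=
  if IsStat2 θ then
    (((∑ i, marg θ i *
        ∑ j, (θ i j / marg θ i) * Real.log ((θ i j / marg θ i) / a i j)) : ℝ) : EReal)
  else ⊤

/-- ℓ¹ (total variation) distance. -/
def dist2v {n : ℕ} (θ ξ : Fin n → Fin n → ℝ) : ℝ := ∑ i, ∑ j, |θ i j - ξ i j|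

def OpenIn2 {n : ℕ} (S Γ : Set (Fin n → Fin n → ℝ)) : Prop :=
  ∀ ζ ∈ Γ, ∃ ε > 0, ∀ ξ ∈ S, dist2v ξ ζ < ε → ξ ∈ Γ

def ClosedIn2 {n : ℕ} (S Γ : Set (Fin n → Fin n → ℝ)) : Prop := OpenIn2 S (S \ Γ)

/-!
Upper bound: the probability of a path factors through its empirical measure `θ`, and changing
the kernel to `b_{ij} = θ_{ij}/θ̄_i` shows that the paths of type `θ` have total probability at
most `exp (-(l-1) I(θ))`. There are only polynomially many types, so frequent values of
`(1/l) log Pr{θ(x_1^l) ∈ Γ}` above `c` produce types in `Γ` with rate at most `-c + o(1)`; by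
compactness they accumulate at a point of `Γ`, which is stationary since row and column sums of
an empirical measure differ by at most `2/(l-1)`.

Lower bound: moving a stationary `θ ∈ Γ` slightly towards the doublet law `π_i a_{ij}` of the
chain makes it strictly positive at a small cost in rate. The kernel `b` of such a `θ` is strictly
positive with stationary doublet law `θ`, the only zero of its rate function (Doeblin). The upper
bound for the `b`-chain then makes its empirical measures concentrate near `θ`, and along those
paths the likelihood ratio of the `a`-chain to the `b`-chain is `exp (-(l-1)(I(θ) + o(1)))`.
-/

namespace DoubletLDP

open scoped Classical Topology

variable {n : ℕ}

section Empirical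

variable {m : ℕ} (x : Fin (m+2) → Fin n)

def transCount (i j : Fin n) : ℕ :=
  #{t : Fin (m+1) | x t.castSucc = i ∧ x t.succ = j}

lemma empNC_eq_transCount_div (i j : Fin n) :
    empNC x i j = transCount x i j / ((m:ℝ)+1) := by
  rw [empNC, sum_boole, transCount]

lemma transCount_le (i j : Fin n) : transCount x i j ≤ m+1 :=
  (card_filter_le _ _).trans_eq (card_fin _)

lemma empNC_nonneg (i j : Fin n) : 0 ≤ empNC x i j := by
  rw [empNC_eq_transCount_div]
  positivity

lemma sum_empNC_row (i : Fin n) :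
    ∑ j, empNC x i j = (∑ t : Fin (m+1), if x t.castSucc = i then (1:ℝ) else 0) / ((m:ℝ)+1) := by
  simp only [empNC, ← sum_div, ite_and]
  rw [sum_comm]
  simp

lemma sum_empNC_col (j : Fin n) :
    ∑ i, empNC x i j = (∑ t : Fin (m+1), if x t.succ = j then (1:ℝ) else 0) / ((m:ℝ)+1) := by
  simp only [empNC, ← sum_div, ite_and]
  rw [sum_comm]
  simp

lemma empNC_mem_simplex2 : empNC x ∈ simplex2 n := by
  refine ⟨empNC_nonneg x, ?_⟩
  simp only [sum_empNC_row, ← sum_div]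
  rw [sum_comm]
  simp only [sum_ite_eq, mem_univ, if_true, sum_const, card_univ,
    Fintype.card_fin, nsmul_eq_mul, mul_one]
  push_cast
  exact div_self (by positivity)

/-- Row and column sums of the empirical measure differ only through the first and last
letters of the path. -/
lemma abs_sum_empNC_row_sub_col_le (i : Fin n) :
    |∑ j, empNC x i j - ∑ j, empNC x j i| ≤ 2 / ((m:ℝ)+1) := by
  set g : Fin (m+2) → ℝ := fun s => if x s = i then 1 else 0
  have htelescope : ∑ t : Fin (m+1), g t.castSucc - ∑ t : Fin (m+1), g t.succ
      = g 0 - g (Fin.last (m+1)) := by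
    linarith [Fin.sum_univ_castSucc g, Fin.sum_univ_succ g]
  have hg : ∀ s, 0 ≤ g s ∧ g s ≤ 1 := fun s => by
    by_cases h : x s = i <;> simp [g, h]
  rw [sum_empNC_row, sum_empNC_col, ← sub_div, abs_div, abs_of_pos (by positivity : (0:ℝ) < m+1)]
  refine div_le_div_of_nonneg_right ?_ (by positivity)
  rw [htelescope, abs_le]
  constructor <;> linarith [hg 0, hg (Fin.last (m+1))]

lemma prod_transitions_eq_prod_pow (g : Fin n → Fin n → ℝ) :
    ∏ t : Fin (m+1), g (x t.castSucc) (x t.succ) = ∏ i, ∏ j, g i j ^ transCount x i j := by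
  rw [← prod_fiberwise_of_maps_to (t := (univ : Finset (Fin n × Fin n)))
    (g := fun t => (x t.castSucc, x t.succ)) (fun _ _ => mem_univ _), Fintype.prod_prod_type]
  refine prod_congr rfl fun i _ => prod_congr rfl fun j _ => ?_
  have hfiber : ∀ t ∈ ({t | (x t.castSucc, x t.succ) = (i, j)} : Finset (Fin (m+1))),
      g (x t.castSucc) (x t.succ) = g i j := fun t ht => by
    obtain ⟨h1, h2⟩ := Prod.mk.inj (mem_filter.1 ht).2
    rw [h1, h2]
  rw [prod_congr rfl hfiber, prod_const, transCount]
  simp [Prod.ext_iff]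

end Empirical

section PathLaw

lemma pathPA_nonneg {k : ℕ} {μ : Fin n → ℝ} {b : Fin n → Fin n → ℝ}
    (hμ : ∀ i, 0 ≤ μ i) (hb : ∀ i j, 0 ≤ b i j) (x : Fin (k+1) → Fin n) :
    0 ≤ pathPA μ b x :=
  mul_nonneg (hμ _) (prod_nonneg fun _ _ => hb _ _)

lemma pathPA_cons {k : ℕ} (μ : Fin n → ℝ) (b : Fin n → Fin n → ℝ) (i : Fin n)
    (y : Fin (k+1) → Fin n) :
    pathPA μ b (Fin.cons i y) = μ i * pathPA (b i) b y := by
  simp only [pathPA, Fin.prod_univ_succ, Fin.cons_zero, Fin.castSucc_zero, Fin.cons_succ,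
    ← Fin.succ_castSucc]

lemma sum_pathPA_eq_one {b : Fin n → Fin n → ℝ} (hb : ∀ i, ∑ j, b i j = 1) :
    ∀ (k : ℕ) {μ : Fin n → ℝ}, ∑ i, μ i = 1 → ∑ x : Fin (k+1) → Fin n, pathPA μ b x = 1
  | 0, μ, hμ => by
    rw [← hμ]
    exact Fintype.sum_equiv (Equiv.funUnique (Fin 1) (Fin n)) _ _ fun x => by simp [pathPA]
  | k + 1, μ, hμ => by
    rw [← (Fin.consEquiv fun _ => Fin n).sum_comp, Fintype.sum_prod_type]
    simp only [Fin.consEquiv, Equiv.coe_fn_mk, pathPA_cons, ← mul_sum,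
      sum_pathPA_eq_one hb k (hb _), mul_one, hμ]

lemma mul_pathPA_le_pathPA {k : ℕ} {c : ℝ} {μ π : Fin n → ℝ} {b : Fin n → Fin n → ℝ}
    (hμπ : ∀ i, c * μ i ≤ π i) (hb : ∀ i j, 0 ≤ b i j) (x : Fin (k+1) → Fin n) :
    c * pathPA μ b x ≤ pathPA π b x := by
  rw [pathPA, pathPA, ← mul_assoc]
  exact mul_le_mul_of_nonneg_right (hμπ _) (prod_nonneg fun _ _ => hb _ _)

end PathLaw

section Topology

lemma isClosed_simplex2 : IsClosed (simplex2 n) := by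
  simp only [simplex2, Set.ofPred_and, Set.ofPred_forall]
  exact (isClosed_iInter fun i => isClosed_iInter fun j =>
    isClosed_le continuous_const (continuous_apply_apply i j)).inter
    (isClosed_eq (by fun_prop) continuous_const)

lemma le_one_of_mem_simplex2 {θ : Fin n → Fin n → ℝ} (hθ : θ ∈ simplex2 n) (i j : Fin n) :
    θ i j ≤ 1 :=
  hθ.2 ▸ (single_le_sum (fun j _ => hθ.1 i j) (mem_univ j)).trans
    (single_le_sum (fun i _ => sum_nonneg fun j _ => hθ.1 i j) (mem_univ i))

lemma isCompact_simplex2 : IsCompact (simplex2 n) := by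
  refine Metric.isCompact_of_isClosed_isBounded isClosed_simplex2
    ((Metric.isBounded_closedBall (x := 0) (r := 1)).subset fun θ hθ => ?_)
  rw [mem_closedBall_zero_iff, pi_norm_le_iff_of_nonneg zero_le_one]
  intro i
  rw [pi_norm_le_iff_of_nonneg zero_le_one]
  intro j
  rw [Real.norm_of_nonneg (hθ.1 i j)]
  exact le_one_of_mem_simplex2 hθ i j

lemma isClosed_setOf_isStat2 : IsClosed {θ : Fin n → Fin n → ℝ | IsStat2 θ} := by
  simp only [IsStat2, Set.ofPred_forall]
  exact isClosed_iInter fun i => isClosed_eq (by fun_prop) (by fun_prop)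

lemma continuous_dist2v (ζ : Fin n → Fin n → ℝ) : Continuous fun ξ => dist2v ξ ζ := by
  unfold dist2v
  fun_prop

lemma isClosed_setOf_le_dist2v (θ : Fin n → Fin n → ℝ) (δ : ℝ) :
    IsClosed {ξ | δ ≤ dist2v ξ θ} :=
  isClosed_le continuous_const (continuous_dist2v θ)

lemma dist2v_self (θ : Fin n → Fin n → ℝ) : dist2v θ θ = 0 := by
  simp [dist2v]

lemma abs_sub_le_dist2v (θ ξ : Fin n → Fin n → ℝ) (i j : Fin n) :
    |θ i j - ξ i j| ≤ dist2v θ ξ :=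
  (single_le_sum (f := fun j => |θ i j - ξ i j|) (fun _ _ => abs_nonneg _) (mem_univ j)).trans
    (single_le_sum (f := fun i => ∑ j, |θ i j - ξ i j|)
      (fun _ _ => sum_nonneg fun _ _ => abs_nonneg _) (mem_univ i))

/-- The `ℓ¹` distance induces the product topology. -/
lemma isClosed_of_closedIn2 {S Γ : Set (Fin n → Fin n → ℝ)} (h : ClosedIn2 S Γ) (hS : IsClosed S)
    (hΓS : Γ ⊆ S) : IsClosed Γ := by
  refine closure_subset_iff_isClosed.1 fun ζ hζ => ?_
  by_contra hζΓ
  obtain ⟨ε, hε, hball⟩ := h ζ ⟨closure_minimal hΓS hS hζ, hζΓ⟩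
  obtain ⟨ξ, hξ, hξΓ⟩ := mem_closure_iff.1 hζ {ξ | dist2v ξ ζ < ε}
    (isOpen_lt (continuous_dist2v ζ) continuous_const) (by simpa [dist2v_self] using hε)
  exact (hball ξ (hΓS hξΓ) hξ).2 hξΓ

end Topology

section Rate

/-- The kernel `b_{ij} = θ_{ij}/θ̄_i` of the rate function; rows with `θ̄_i = 0` are filled
with `a_i`, which keeps it stochastic. -/
noncomputable def condKernel (a θ : Fin n → Fin n → ℝ) (i j : Fin n) : ℝ :=
  if marg θ i = 0 then a i j else θ i j / marg θ i

noncomputable def logRatioSum (θ b a : Fin n → Fin n → ℝ) : ℝ :=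
  ∑ i, ∑ j, θ i j * Real.log (b i j / a i j)

noncomputable def relEntropyRate (a θ : Fin n → Fin n → ℝ) : ℝ :=
  logRatioSum θ (condKernel a θ) a

lemma logRatioSum_le_add_mul_dist2v (θ ξ b a : Fin n → Fin n → ℝ) :
    logRatioSum ξ b a
      ≤ logRatioSum θ b a + (∑ i, ∑ j, |Real.log (b i j / a i j)|) * dist2v ξ θ := by
  rw [← sub_le_iff_le_add', logRatioSum, logRatioSum, ← sum_sub_distrib, sum_mul]
  refine sum_le_sum fun i _ => ?_
  rw [← sum_sub_distrib, sum_mul]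
  refine sum_le_sum fun j _ => ?_
  rw [← sub_mul, mul_comm]
  exact (le_abs_self _).trans (by
    rw [abs_mul]
    exact mul_le_mul_of_nonneg_left (abs_sub_le_dist2v ξ θ i j) (abs_nonneg _))

variable {a θ : Fin n → Fin n → ℝ}

lemma marg_nonneg (hθ : ∀ i j, 0 ≤ θ i j) (i : Fin n) : 0 ≤ marg θ i :=
  sum_nonneg fun j _ => hθ i j

lemma le_marg (hθ : ∀ i j, 0 ≤ θ i j) (i j : Fin n) : θ i j ≤ marg θ i :=
  single_le_sum (fun j _ => hθ i j) (mem_univ j)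

lemma eq_zero_of_marg_eq_zero (hθ : ∀ i j, 0 ≤ θ i j) {i : Fin n} (hi : marg θ i = 0)
    (j : Fin n) : θ i j = 0 :=
  le_antisymm (hi ▸ le_marg hθ i j) (hθ i j)

lemma condKernel_of_marg_ne_zero {i : Fin n} (hi : marg θ i ≠ 0) (j : Fin n) :
    condKernel a θ i j = θ i j / marg θ i :=
  if_neg hi

lemma condKernel_nonneg (ha : ∀ i j, 0 ≤ a i j) (hθ : ∀ i j, 0 ≤ θ i j) (i j : Fin n) :
    0 ≤ condKernel a θ i j := by
  unfold condKernel
  split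
  · exact ha i j
  · exact div_nonneg (hθ i j) (marg_nonneg hθ i)

lemma condKernel_pos (hθ : ∀ i j, 0 ≤ θ i j) {i j : Fin n} (hij : 0 < θ i j) :
    0 < condKernel a θ i j := by
  have hm : 0 < marg θ i := hij.trans_le (le_marg hθ i j)
  rw [condKernel_of_marg_ne_zero hm.ne']
  exact div_pos hij hm

lemma sum_condKernel (ha : ∀ i, ∑ j, a i j = 1) (i : Fin n) : ∑ j, condKernel a θ i j = 1 := by
  by_cases h : marg θ i = 0
  · simp [condKernel, h, ha i]
  · simp only [condKernel_of_marg_ne_zero h, ← sum_div]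
    exact div_self h

lemma marg_mul_condKernel (hθ : ∀ i j, 0 ≤ θ i j) (i j : Fin n) :
    marg θ i * condKernel a θ i j = θ i j := by
  by_cases h : marg θ i = 0
  · rw [h, zero_mul, eq_zero_of_marg_eq_zero hθ h]
  · rw [condKernel_of_marg_ne_zero h, mul_div_cancel₀ _ h]

lemma rate16_eq_relEntropyRate (hθ : ∀ i j, 0 ≤ θ i j) (hstat : IsStat2 θ) :
    rate16 a θ = relEntropyRate a θ := by
  rw [rate16, if_pos hstat, relEntropyRate, logRatioSum, EReal.coe_eq_coe_iff]
  refine sum_congr rfl fun i _ => ?_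
  by_cases h : marg θ i = 0
  · simp [h, eq_zero_of_marg_eq_zero hθ h]
  · simp only [mul_sum, condKernel_of_marg_ne_zero h, ← mul_assoc, mul_div_cancel₀ _ h]

/-- Since `Real.log 0 = 0`, this closed form is continuous on the whole nonnegative orthant. -/
lemma relEntropyRate_eq_sum_mul_log (ha : ∀ i j, 0 < a i j) (hθ : ∀ i j, 0 ≤ θ i j) :
    relEntropyRate a θ = ∑ i, ∑ j, (θ i j * Real.log (θ i j) - θ i j * Real.log (a i j))
      - ∑ i, marg θ i * Real.log (marg θ i) := by
  rw [relEntropyRate, logRatioSum, ← sum_sub_distrib]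
  refine sum_congr rfl fun i _ => ?_
  by_cases hm : marg θ i = 0
  · simp [hm, eq_zero_of_marg_eq_zero hθ hm]
  have hmpos : 0 < marg θ i := (marg_nonneg hθ i).lt_of_ne' hm
  rw [marg, sum_mul, ← sum_sub_distrib]
  refine sum_congr rfl fun j _ => ?_
  rcases (hθ i j).eq_or_lt with h0 | hpos
  · simp [← h0]
  rw [condKernel_of_marg_ne_zero hm, div_div, Real.log_div hpos.ne' (mul_pos hmpos (ha i j)).ne',
    Real.log_mul hmpos.ne' (ha i j).ne', marg]
  ring

lemma continuousOn_relEntropyRate (ha : ∀ i j, 0 < a i j) :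
    ContinuousOn (relEntropyRate a) {θ | ∀ i j, 0 ≤ θ i j} := by
  refine ContinuousOn.congr (Continuous.continuousOn ?_) fun θ hθ =>
    relEntropyRate_eq_sum_mul_log ha hθ
  have hcoord : ∀ i j, Continuous fun θ : Fin n → Fin n → ℝ => θ i j :=
    fun i j => (continuous_apply j).comp (continuous_apply i)
  refine Continuous.sub (continuous_finsetSum _ fun i _ => continuous_finsetSum _ fun j _ =>
    (Real.continuous_mul_log.comp (hcoord i j)).sub ((hcoord i j).mul continuous_const))
    (continuous_finsetSum _ fun i _ => Real.continuous_mul_log.comp ?_)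
  exact continuous_finsetSum _ fun j _ => hcoord i j

/-- Gibbs' inequality row by row: `klFun ≥ 0`, with equality only at `1`. -/
lemma relEntropyRate_eq_sum_klFun {b ξ : Fin n → Fin n → ℝ} (hb : ∀ i j, 0 < b i j)
    (hbrow : ∀ i, ∑ j, b i j = 1) (hξ : ∀ i j, 0 ≤ ξ i j) :
    relEntropyRate b ξ = ∑ i, ∑ j, marg ξ i * b i j *
      InformationTheory.klFun (ξ i j / (marg ξ i * b i j)) := by
  rw [relEntropyRate, logRatioSum]
  refine sum_congr rfl fun i _ => ?_
  by_cases hm : marg ξ i = 0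
  · simp [hm, eq_zero_of_marg_eq_zero hξ hm]
  have hq : ∀ j, 0 < marg ξ i * b i j := fun j => mul_pos ((marg_nonneg hξ i).lt_of_ne' hm) (hb i j)
  have hterm : ∀ j, marg ξ i * b i j * InformationTheory.klFun (ξ i j / (marg ξ i * b i j))
      = ξ i j * Real.log (condKernel b ξ i j / b i j) + (marg ξ i * b i j - ξ i j) := fun j => by
    have hcancel : marg ξ i * b i j * (ξ i j / (marg ξ i * b i j)) = ξ i j :=
      mul_div_cancel₀ _ (hq j).ne'
    rw [InformationTheory.klFun_apply, condKernel_of_marg_ne_zero hm, div_div]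
    linear_combination (Real.log (ξ i j / (marg ξ i * b i j)) - 1) * hcancel
  rw [sum_congr rfl fun j _ => hterm j, sum_add_distrib, sum_sub_distrib, ← mul_sum, hbrow,
    mul_one, marg, sub_self, add_zero]

lemma eq_marg_mul_of_relEntropyRate_nonpos {b ξ : Fin n → Fin n → ℝ} (hb : ∀ i j, 0 < b i j)
    (hbrow : ∀ i, ∑ j, b i j = 1) (hξ : ∀ i j, 0 ≤ ξ i j) (h : relEntropyRate b ξ ≤ 0)
    (i j : Fin n) : ξ i j = marg ξ i * b i j := by
  have hq : ∀ i j, 0 ≤ marg ξ i * b i j := fun i j => mul_nonneg (marg_nonneg hξ i) (hb i j).le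
  have hnonneg : ∀ i j, 0 ≤ marg ξ i * b i j *
      InformationTheory.klFun (ξ i j / (marg ξ i * b i j)) := fun i j =>
    mul_nonneg (hq i j) (InformationTheory.klFun_nonneg (div_nonneg (hξ i j) (hq i j)))
  rw [relEntropyRate_eq_sum_klFun hb hbrow hξ] at h
  have hzero := (sum_eq_zero_iff_of_nonneg fun i _ => sum_nonneg fun j _ => hnonneg i j).1
    (le_antisymm h (sum_nonneg fun i _ => sum_nonneg fun j _ => hnonneg i j)) i (mem_univ i)
  rcases mul_eq_zero.1 ((sum_eq_zero_iff_of_nonneg fun j _ => hnonneg i j).1 hzero j (mem_univ j))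
    with hq | hkl
  · rcases mul_eq_zero.1 hq with hm | hb0
    · rw [hm, zero_mul, eq_zero_of_marg_eq_zero hξ hm]
    · exact absurd hb0 (hb i j).ne'
  · have hq0 : marg ξ i * b i j ≠ 0 := fun h0 => by
      simp [h0, InformationTheory.klFun_zero] at hkl
    exact (div_eq_one_iff_eq hq0).1
      ((InformationTheory.klFun_eq_zero_iff (div_nonneg (hξ i j) (hq i j))).1 hkl)

end Rate

section Types

variable {m : ℕ}

lemma pathPA_eq_exp_mul_pathPA (π : Fin n → ℝ) {a b : Fin n → Fin n → ℝ}
    (ha : ∀ i j, 0 < a i j) (x : Fin (m+2) → Fin n) (hb : ∀ i j, 0 < empNC x i j → 0 < b i j) :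
    pathPA π a x = Real.exp (-((m:ℝ)+1) * logRatioSum (empNC x) b a) * pathPA π b x := by
  have hpow : ∀ i j, a i j ^ transCount x i j = Real.exp (-((m:ℝ)+1) *
      (empNC x i j * Real.log (b i j / a i j))) * b i j ^ transCount x i j := by
    intro i j
    rcases (empNC_nonneg x i j).eq_or_lt with h0 | hpos
    · have hN := h0
      rw [empNC_eq_transCount_div, eq_comm, div_eq_zero_iff, Nat.cast_eq_zero] at hN
      simp [← h0, hN.resolve_right (by positivity)]
    · have hN : ((m:ℝ)+1) * empNC x i j = transCount x i j := by
        rw [empNC_eq_transCount_div]; field_simp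
      have hbpos := hb i j hpos
      rw [← mul_assoc, neg_mul, hN, neg_mul, ← Real.log_pow, Real.exp_neg,
        Real.exp_log (pow_pos (div_pos hbpos (ha i j)) _), div_pow, inv_div,
        div_mul_cancel₀ _ (pow_pos hbpos _).ne']
  simp only [pathPA, prod_transitions_eq_prod_pow x, hpow, prod_mul_distrib, ← Real.exp_sum,
    logRatioSum, mul_sum]
  ring

variable {π : Fin n → ℝ} {a : Fin n → Fin n → ℝ}

lemma sum_pathPA_empNC_eq_le (hπ : (∀ i, 0 ≤ π i) ∧ ∑ i, π i = 1) (ha : ∀ i j, 0 < a i j)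
    (harow : ∀ i, ∑ j, a i j = 1) {θ : Fin n → Fin n → ℝ} (hθ : ∀ i j, 0 ≤ θ i j) :
    ∑ x : Fin (m+2) → Fin n with empNC x = θ, pathPA π a x
      ≤ Real.exp (-((m:ℝ)+1) * relEntropyRate a θ) := by
  have hchange : ∀ x ∈ ({x | empNC x = θ} : Finset (Fin (m+2) → Fin n)),
      pathPA π a x = Real.exp (-((m:ℝ)+1) * relEntropyRate a θ) * pathPA π (condKernel a θ) x := by
    intro x hx
    rw [← (mem_filter.1 hx).2]
    exact pathPA_eq_exp_mul_pathPA π ha x fun i j h => condKernel_pos (empNC_nonneg x) h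
  rw [sum_congr rfl hchange, ← mul_sum]
  refine mul_le_of_le_one_right (Real.exp_nonneg _) ?_
  calc ∑ x : Fin (m+2) → Fin n with empNC x = θ, pathPA π (condKernel a θ) x
      ≤ ∑ x, pathPA π (condKernel a θ) x := by
        refine sum_le_sum_of_subset_of_nonneg (filter_subset _ _) fun x _ _ => ?_
        exact pathPA_nonneg hπ.1 (condKernel_nonneg (fun i j => (ha i j).le) hθ) x
    _ = 1 := sum_pathPA_eq_one (sum_condKernel harow) (m+1) hπ.2

lemma card_image_empNC_le (m : ℕ) :
    (#(univ.image (empNC : (Fin (m+2) → Fin n) → _)) : ℝ) ≤ ((m:ℝ)+2) ^ (n*n) := by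
  have hsub : univ.image (empNC : (Fin (m+2) → Fin n) → _)
      ⊆ univ.image fun (N : Fin n → Fin n → Fin (m+2)) i j => (N i j : ℝ) / ((m:ℝ)+1) := by
    intro θ hθ
    obtain ⟨x, -, rfl⟩ := mem_image.1 hθ
    refine mem_image.2 ⟨fun i j => ⟨transCount x i j, Nat.lt_succ_of_le (transCount_le x i j)⟩,
      mem_univ _, ?_⟩
    funext i j
    simp [empNC_eq_transCount_div]
  have hcard := (card_le_card hsub).trans card_image_le
  rw [card_univ, Fintype.card_fun, Fintype.card_fun, Fintype.card_fin, Fintype.card_fin,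
    ← pow_mul] at hcard
  exact_mod_cast hcard

lemma exists_empNC_mem_prEventNC_le (hπ : (∀ i, 0 ≤ π i) ∧ ∑ i, π i = 1)
    (ha : ∀ i j, 0 < a i j) (harow : ∀ i, ∑ j, a i j = 1) {Γ : Set (Fin n → Fin n → ℝ)}
    (hΓ : ∃ x : Fin (m+2) → Fin n, empNC x ∈ Γ) :
    ∃ x : Fin (m+2) → Fin n, empNC x ∈ Γ ∧
      prEventNC π a m Γ
        ≤ ((m:ℝ)+2) ^ (n*n) * Real.exp (-((m:ℝ)+1) * relEntropyRate a (empNC x)) := by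
  set S := (univ.image (empNC : (Fin (m+2) → Fin n) → _)).filter (· ∈ Γ)
  have hS : ∀ θ ∈ S, (∃ x : Fin (m+2) → Fin n, empNC x = θ) ∧ θ ∈ Γ := fun θ hθ => by
    simpa [S] using hθ
  obtain ⟨θ₀, hθ₀, hmin⟩ := S.exists_min_image (relEntropyRate a)
    (let ⟨x, hx⟩ := hΓ; ⟨empNC x, mem_filter.2 ⟨mem_image_of_mem _ (mem_univ x), hx⟩⟩)
  obtain ⟨⟨x₀, rfl⟩, hx₀⟩ := hS _ hθ₀
  refine ⟨x₀, hx₀, ?_⟩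
  have hfiber : ∀ θ ∈ S, ∑ x ∈ ({x | empNC x ∈ Γ} : Finset (Fin (m+2) → Fin n)) with empNC x = θ,
      pathPA π a x ≤ Real.exp (-((m:ℝ)+1) * relEntropyRate a θ) := by
    intro θ hθ
    obtain ⟨⟨x, rfl⟩, -⟩ := hS θ hθ
    refine (sum_le_sum_of_subset_of_nonneg (monotone_filter_left _ (filter_subset _ _))
      fun y _ _ => pathPA_nonneg hπ.1 (fun i j => (ha i j).le) y).trans ?_
    exact sum_pathPA_empNC_eq_le hπ ha harow (empNC_nonneg x)
  calc prEventNC π a m Γ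
      = ∑ θ ∈ S, ∑ x ∈ ({x | empNC x ∈ Γ} : Finset (Fin (m+2) → Fin n)) with empNC x = θ,
          pathPA π a x := by
        rw [prEventNC, ← sum_filter]
        exact (sum_fiberwise_of_maps_to (fun x hx => by simpa [S] using hx) _).symm
    _ ≤ ∑ θ ∈ S, Real.exp (-((m:ℝ)+1) * relEntropyRate a θ) := sum_le_sum hfiber
    _ ≤ ∑ _θ ∈ S, Real.exp (-((m:ℝ)+1) * relEntropyRate a (empNC x₀)) :=
        sum_le_sum fun θ hθ => Real.exp_le_exp.2 (by nlinarith [hmin θ hθ])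
    _ ≤ ((m:ℝ)+2) ^ (n*n) * Real.exp (-((m:ℝ)+1) * relEntropyRate a (empNC x₀)) := by
        rw [sum_const, nsmul_eq_mul]
        exact mul_le_mul_of_nonneg_right
          ((Nat.cast_le.2 (card_filter_le _ _)).trans (card_image_empNC_le m)) (Real.exp_nonneg _)

end Types

section Asymptotics

noncomputable def logProbRate (π : Fin n → ℝ) (a : Fin n → Fin n → ℝ)
    (Γ : Set (Fin n → Fin n → ℝ)) (m : ℕ) : EReal :=
  ((((m:ℝ)+2)⁻¹ : ℝ) : EReal) * elog (prEventNC π a m Γ)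

lemma coe_mul_elog_of_pos (r : ℝ) {p : ℝ} (hp : 0 < p) :
    (r : EReal) * elog p = ((r * Real.log p : ℝ) : EReal) := by
  rw [elog, if_neg hp.not_ge, EReal.coe_mul]

lemma coe_mul_elog_of_nonpos {r p : ℝ} (hr : 0 < r) (hp : p ≤ 0) : (r : EReal) * elog p = ⊥ := by
  rw [elog, if_pos hp, EReal.coe_mul_bot_of_pos hr]

lemma limsup_le_of_forall_frequently {ι : Type*} {f : Filter ι} {u : ι → EReal} {X : EReal}
    (h : ∀ c : ℝ, (∃ᶠ m in f, (c : EReal) < u m) → (c : EReal) ≤ X) : limsup u f ≤ X := by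
  by_contra! hlt
  obtain ⟨c, hXc, hc⟩ := EReal.exists_between_coe_real hlt
  exact (h c (frequently_lt_of_lt_limsup (by isBoundedDefault) hc)).not_gt hXc

lemma tendsto_mul_log_sub_mul_div (K c : ℝ) :
    Tendsto (fun m : ℕ => (K * Real.log ((m:ℝ)+2) - c * ((m:ℝ)+2)) / ((m:ℝ)+1)) atTop
      (𝓝 (-c)) := by
  have hlog : Tendsto (fun m : ℕ => Real.log ((m:ℝ)+2) / ((m:ℝ)+1)) atTop (𝓝 0) := by
    have := (Real.tendsto_pow_log_div_mul_add_atTop 1 (-1) 1 one_ne_zero).comp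
      (tendsto_atTop_add_const_right atTop 2 tendsto_natCast_atTop_atTop)
    refine this.congr fun m => ?_
    simp only [Function.comp_apply, pow_one, one_mul]
    ring_nf
  have hlim := (hlog.const_mul K).sub (tendsto_one_div_add_atTop_nhds_zero_nat.const_mul c)
  rw [mul_zero, mul_zero, sub_zero] at hlim
  rw [← add_zero (-c)]
  refine (hlim.const_add (-c)).congr fun m => ?_
  field_simp
  ring

end Asymptotics

section UpperBound

variable {π : Fin n → ℝ} {a : Fin n → Fin n → ℝ} {Γ : Set (Fin n → Fin n → ℝ)}

lemma exists_empNC_of_lt_logProbRate (hπ : (∀ i, 0 ≤ π i) ∧ ∑ i, π i = 1)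
    (ha : ∀ i j, 0 < a i j) (harow : ∀ i, ∑ j, a i j = 1) {c : ℝ} {m : ℕ}
    (hc : (c : EReal) < logProbRate π a Γ m) :
    ∃ x : Fin (m+2) → Fin n, empNC x ∈ Γ ∧ relEntropyRate a (empNC x)
      ≤ (((n*n : ℕ) : ℝ) * Real.log ((m:ℝ)+2) - c * ((m:ℝ)+2)) / ((m:ℝ)+1) := by
  have hP : 0 < prEventNC π a m Γ := by
    by_contra! h
    rw [logProbRate, coe_mul_elog_of_nonpos (by positivity) h] at hc
    exact not_lt_bot hc
  have hΓ : ∃ x : Fin (m+2) → Fin n, empNC x ∈ Γ := by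
    by_contra! h
    simp [prEventNC, h] at hP
  obtain ⟨x, hxΓ, hle⟩ := exists_empNC_mem_prEventNC_le hπ ha harow hΓ
  refine ⟨x, hxΓ, (le_div_iff₀ (by positivity)).2 ?_⟩
  rw [logProbRate, coe_mul_elog_of_pos _ hP, EReal.coe_lt_coe_iff, inv_mul_eq_div,
    lt_div_iff₀ (by positivity)] at hc
  have hlog := Real.log_le_log hP hle
  rw [Real.log_mul (by positivity) (Real.exp_pos _).ne', Real.log_exp, Real.log_pow] at hlog
  linarith

/-- By compactness the empirical measures realising these values accumulate at some `θ`,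
which is stationary because row and column sums of an empirical measure differ by `O(1/m)`. -/
lemma exists_isStat2_of_frequently_lt_logProbRate (hπ : (∀ i, 0 ≤ π i) ∧ ∑ i, π i = 1)
    (ha : ∀ i j, 0 < a i j) (harow : ∀ i, ∑ j, a i j = 1) (hcl : IsClosed Γ) {c : ℝ}
    (hc : ∃ᶠ m in atTop, (c : EReal) < logProbRate π a Γ m) :
    ∃ θ ∈ Γ, θ ∈ simplex2 n ∧ IsStat2 θ ∧ relEntropyRate a θ ≤ -c := by
  obtain ⟨φ, hφ, hcφ⟩ := extraction_of_frequently_atTop hc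
  choose x hxΓ hxrate using fun k => exists_empNC_of_lt_logProbRate hπ ha harow (hcφ k)
  obtain ⟨θ, hθ, ψ, hψ, hlim⟩ :=
    isCompact_simplex2.tendsto_subseq fun k => empNC_mem_simplex2 (x k)
  have hφψ : Tendsto (φ ∘ ψ) atTop atTop := (hφ.comp hψ).tendsto_atTop
  refine ⟨θ, hcl.mem_of_tendsto hlim (Eventually.of_forall fun k => hxΓ _), hθ, fun i => ?_, ?_⟩
  · have hgap : Tendsto (fun k => ∑ j, empNC (x (ψ k)) i j - ∑ j, empNC (x (ψ k)) j i)
        atTop (𝓝 0) := by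
      refine squeeze_zero_norm (fun k => (Real.norm_eq_abs _).trans_le
        (abs_sum_empNC_row_sub_col_le _ i)) ?_
      have := ((tendsto_one_div_add_atTop_nhds_zero_nat (𝕜 := ℝ)).const_mul 2).comp hφψ
      simpa [Function.comp_def, div_eq_mul_inv] using this
    have hcont : Continuous fun ξ : Fin n → Fin n → ℝ => ∑ j, ξ i j - ∑ j, ξ j i := by fun_prop
    exact sub_eq_zero.1 (tendsto_nhds_unique ((hcont.tendsto θ).comp hlim) hgap)
  · refine le_of_tendsto_of_tendsto ?_ ((tendsto_mul_log_sub_mul_div _ c).comp hφψ)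
      (Eventually.of_forall fun k => hxrate (ψ k))
    exact ((continuousOn_relEntropyRate ha θ hθ.1).tendsto).comp (tendsto_nhdsWithin_iff.2
      ⟨hlim, Eventually.of_forall fun k => (empNC_mem_simplex2 _).1⟩)

theorem limsup_logProbRate_le (hπ : (∀ i, 0 ≤ π i) ∧ ∑ i, π i = 1)
    (ha : ∀ i j, 0 < a i j) (harow : ∀ i, ∑ j, a i j = 1) (hcl : IsClosed Γ) :
    limsup (logProbRate π a Γ) atTop ≤ -(⨅ θ ∈ Γ ∩ simplex2 n, rate16 a θ) := by
  refine limsup_le_of_forall_frequently fun c hc => ?_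
  obtain ⟨θ, hθΓ, hθ, hstat, hrate⟩ :=
    exists_isStat2_of_frequently_lt_logProbRate hπ ha harow hcl hc
  rw [EReal.le_neg, ← EReal.coe_neg]
  refine (iInf₂_le θ ⟨hθΓ, hθ⟩).trans ?_
  rw [rate16_eq_relEntropyRate hθ.1 hstat]
  exact EReal.coe_le_coe_iff.2 hrate

end UpperBound

section StochasticMatrix

/-- Doeblin: a strictly positive stochastic matrix contracts the `ℓ¹` norm of zero-sum vectors. -/
theorem eq_of_isInvariant_of_pos {ι : Type*} [Fintype ι] {b : ι → ι → ℝ}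
    (hb : ∀ i j, 0 < b i j) (hbrow : ∀ i, ∑ j, b i j = 1) {μ ν : ι → ℝ}
    (hsum : ∑ i, μ i = ∑ i, ν i) (hμ : ∀ j, ∑ i, μ i * b i j = μ j)
    (hν : ∀ j, ∑ i, ν i * b i j = ν j) : μ = ν := by
  rcases isEmpty_or_nonempty ι with hι | hι
  · exact funext fun i => isEmptyElim i
  obtain ⟨p, -, hp⟩ := (univ : Finset (ι × ι)).exists_min_image (fun p => b p.1 p.2) univ_nonempty
  set ε := b p.1 p.2
  have hε : ∀ i j, ε ≤ b i j := fun i j => hp (i, j) (mem_univ _)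
  set d : ι → ℝ := μ - ν
  have hd : ∀ j, d j = ∑ i, d i * (b i j - ε) := fun j => by
    simp only [d, Pi.sub_apply, sub_mul, mul_sub, sum_sub_distrib, hμ, hν, ← sum_mul, hsum]
    ring
  have hcontract : ∑ j, |d j| ≤ (1 - Fintype.card ι * ε) * ∑ i, |d i| := by
    calc ∑ j, |d j| ≤ ∑ j, ∑ i, |d i| * (b i j - ε) := sum_le_sum fun j _ => by
          rw [hd j]
          refine (abs_sum_le_sum_abs _ _).trans_eq (sum_congr rfl fun i _ => ?_)
          rw [abs_mul, abs_of_nonneg (sub_nonneg.2 (hε i j))]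
      _ = (1 - Fintype.card ι * ε) * ∑ i, |d i| := by
          rw [sum_comm, mul_comm, sum_mul]
          refine sum_congr rfl fun i _ => ?_
          rw [← mul_sum, sum_sub_distrib, hbrow, sum_const, card_univ, nsmul_eq_mul]
  have hpos : 0 < (Fintype.card ι : ℝ) * ε := mul_pos (by exact_mod_cast Fintype.card_pos) (hb _ _)
  have hzero : ∑ i, |d i| = 0 := by
    nlinarith [sum_nonneg fun i (_ : i ∈ univ) => abs_nonneg (d i)]
  funext i
  exact sub_eq_zero.1 (abs_eq_zero.1 ((sum_eq_zero_iff_of_nonneg fun i _ => abs_nonneg (d i)).1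
    hzero i (mem_univ i)))

lemma pos_of_isInvariant {ι : Type*} [Fintype ι] {π : ι → ℝ} {a : ι → ι → ℝ}
    (hπ : ∀ i, 0 ≤ π i) (hsum : ∑ i, π i ≠ 0) (ha : ∀ i j, 0 < a i j)
    (hinv : ∀ j, ∑ i, π i * a i j = π j) (j : ι) : 0 < π j := by
  obtain ⟨i, -, hi⟩ := exists_ne_zero_of_sum_ne_zero hsum
  exact hinv j ▸ (mul_pos ((hπ i).lt_of_ne' hi) (ha i j)).trans_le
    (single_le_sum (f := fun i => π i * a i j) (fun i _ => mul_nonneg (hπ i) (ha i j).le)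
      (mem_univ i))

end StochasticMatrix

section LowerBound

variable {π : Fin n → ℝ} {a b θ : Fin n → Fin n → ℝ} {Γ : Set (Fin n → Fin n → ℝ)}

lemma sum_marg_mul_eq_marg (hθb : ∀ i j, marg θ i * b i j = θ i j) (hstat : IsStat2 θ)
    (j : Fin n) : ∑ i, marg θ i * b i j = marg θ j := by
  simp only [hθb]
  exact (hstat j).symm

lemma eq_of_relEntropyRate_nonpos (hb : ∀ i j, 0 < b i j) (hbrow : ∀ i, ∑ j, b i j = 1)
    (hθ : θ ∈ simplex2 n) (hθb : ∀ i j, marg θ i * b i j = θ i j) (hθstat : IsStat2 θ)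
    {ξ : Fin n → Fin n → ℝ} (hξ : ξ ∈ simplex2 n) (hξstat : IsStat2 ξ)
    (h : relEntropyRate b ξ ≤ 0) : ξ = θ := by
  have hξb : ∀ i j, marg ξ i * b i j = ξ i j := fun i j =>
    (eq_marg_mul_of_relEntropyRate_nonpos hb hbrow hξ.1 h i j).symm
  have hmarg : marg ξ = marg θ := eq_of_isInvariant_of_pos hb hbrow (hξ.2.trans hθ.2.symm)
    (sum_marg_mul_eq_marg hξb hξstat) (sum_marg_mul_eq_marg hθb hθstat)
  funext i j
  rw [← hξb, ← hθb, hmarg]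

lemma exists_pos_le_rate16 (hb : ∀ i j, 0 < b i j) (hbrow : ∀ i, ∑ j, b i j = 1)
    (hθ : θ ∈ simplex2 n) (hθb : ∀ i j, marg θ i * b i j = θ i j) (hθstat : IsStat2 θ)
    {δ : ℝ} (hδ : 0 < δ) :
    ∃ γ : ℝ, 0 < γ ∧ ∀ ξ ∈ {ξ | δ ≤ dist2v ξ θ} ∩ simplex2 n, (γ : EReal) ≤ rate16 b ξ := by
  set K := {ξ | δ ≤ dist2v ξ θ} ∩ simplex2 n ∩ {ξ | IsStat2 ξ}
  rcases K.eq_empty_or_nonempty with hK | hK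
  · refine ⟨1, one_pos, fun ξ hξ => ?_⟩
    have hs : ¬ IsStat2 ξ := fun hs => hK.subset ⟨hξ, hs⟩
    simp [rate16, hs]
  have hKc : IsCompact K := isCompact_simplex2.of_isClosed_subset
    (((isClosed_setOf_le_dist2v θ δ).inter isClosed_simplex2).inter
      isClosed_setOf_isStat2) fun ξ hξ => hξ.1.2
  obtain ⟨ξm, hξm, hmin⟩ := hKc.exists_isMinOn hK
    ((continuousOn_relEntropyRate hb).mono fun ξ hξ => hξ.1.2.1)
  refine ⟨relEntropyRate b ξm, ?_, fun ξ hξ => ?_⟩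
  · by_contra! h
    have hδ' := hξm.1.1
    rw [Set.mem_ofPred_eq, eq_of_relEntropyRate_nonpos hb hbrow hθ hθb hθstat hξm.1.2 hξm.2 h,
      dist2v_self] at hδ'
    linarith
  · by_cases hs : IsStat2 ξ
    · rw [rate16_eq_relEntropyRate hξ.2.1 hs]
      exact EReal.coe_le_coe_iff.2 (hmin ⟨hξ, hs⟩)
    · simp [rate16, hs]

lemma prEventNC_add_prEventNC_compl {μ : Fin n → ℝ} (hμ : ∑ i, μ i = 1)
    (hbrow : ∀ i, ∑ j, b i j = 1) (m : ℕ) (Γ : Set (Fin n → Fin n → ℝ)) :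
    prEventNC μ b m Γ + prEventNC μ b m Γᶜ = 1 := by
  rw [prEventNC, prEventNC, ← sum_add_distrib, ← sum_pathPA_eq_one hbrow (m+1) hμ]
  refine sum_congr rfl fun x _ => ?_
  by_cases h : empNC x ∈ Γ <;> simp [h]

lemma prEventNC_le_of_logProbRate_lt {m : ℕ} {c : ℝ} (h : logProbRate π a Γ m < c) :
    prEventNC π a m Γ ≤ Real.exp (c * ((m:ℝ)+2)) := by
  rcases le_or_gt (prEventNC π a m Γ) 0 with hP | hP
  · exact hP.trans (Real.exp_nonneg _)
  rw [logProbRate, coe_mul_elog_of_pos _ hP, EReal.coe_lt_coe_iff, inv_mul_eq_div,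
    div_lt_iff₀ (by positivity)] at h
  exact (Real.log_le_iff_le_exp hP).1 h.le

/-- The upper bound for the `b`-chain itself, combined with the rate gap `exists_pos_le_rate16`. -/
lemma eventually_half_le_prEventNC_ball (hb : ∀ i j, 0 < b i j) (hbrow : ∀ i, ∑ j, b i j = 1)
    (hθ : θ ∈ simplex2 n) (hθb : ∀ i j, marg θ i * b i j = θ i j) (hθstat : IsStat2 θ)
    {δ : ℝ} (hδ : 0 < δ) :
    ∀ᶠ m in atTop, 1/2 ≤ prEventNC (marg θ) b m {ξ | dist2v ξ θ < δ} := by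
  obtain ⟨γ, hγ, hle⟩ := exists_pos_le_rate16 hb hbrow hθ hθb hθstat hδ
  have hlimsup := limsup_logProbRate_le ⟨marg_nonneg hθ.1, hθ.2⟩ hb hbrow
    (isClosed_setOf_le_dist2v θ δ)
  have hlt : limsup (logProbRate (marg θ) b {ξ | δ ≤ dist2v ξ θ}) atTop < ((-(γ/2) : ℝ) : EReal) :=
    hlimsup.trans_lt ((EReal.neg_le_neg_iff.2 (le_iInf₂ hle)).trans_lt
      (by rw [← EReal.coe_neg, EReal.coe_lt_coe_iff]; linarith))
  have hexp : Tendsto (fun m : ℕ => Real.exp (-(γ/2) * ((m:ℝ)+2))) atTop (𝓝 0) :=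
    Real.tendsto_exp_atBot.comp ((tendsto_atTop_add_const_right atTop 2
      tendsto_natCast_atTop_atTop).const_mul_atTop_of_neg (by linarith))
  filter_upwards [eventually_lt_of_limsup_lt hlt, hexp.eventually (eventually_le_nhds one_half_pos)]
    with m hm hm'
  have hsplit := prEventNC_add_prEventNC_compl (μ := marg θ) hθ.2 hbrow m {ξ | dist2v ξ θ < δ}
  rw [show {ξ | dist2v ξ θ < δ}ᶜ = {ξ | δ ≤ dist2v ξ θ} by ext; simp] at hsplit
  linarith [prEventNC_le_of_logProbRate_lt hm]

lemma exists_pos_mul_le {ι : Type*} [Finite ι] {v : ι → ℝ} (hv : ∀ i, 0 < v i) (w : ι → ℝ) :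
    ∃ c > 0, ∀ i, c * w i ≤ v i := by
  have h : ∀ᶠ c in 𝓝[>] (0:ℝ), ∀ i, c * w i ≤ v i := eventually_all.2 fun i =>
    nhdsWithin_le_nhds ((((continuous_id.mul continuous_const).tendsto' 0 0 (zero_mul _)).eventually
      (eventually_le_nhds (hv i))))
  obtain ⟨c, hc, hcw⟩ := (h.and self_mem_nhdsWithin).exists
  exact ⟨c, hcw, hc⟩

lemma mul_exp_mul_pathPA_le {m : ℕ} {μ : Fin n → ℝ} {c δ : ℝ}
    (hπ : ∀ i, 0 ≤ π i) (ha : ∀ i j, 0 < a i j) (hb : ∀ i j, 0 < b i j)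
    (hμπ : ∀ i, c * μ i ≤ π i) {x : Fin (m+2) → Fin n} (hx : dist2v (empNC x) θ < δ) :
    c * Real.exp (-((m:ℝ)+1) * (logRatioSum θ b a
      + (∑ i, ∑ j, |Real.log (b i j / a i j)|) * δ)) * pathPA μ b x ≤ pathPA π a x := by
  have hC : 0 ≤ ∑ i, ∑ j, |Real.log (b i j / a i j)| := by positivity
  have hrate : logRatioSum (empNC x) b a
      ≤ logRatioSum θ b a + (∑ i, ∑ j, |Real.log (b i j / a i j)|) * δ := by
    refine (logRatioSum_le_add_mul_dist2v θ (empNC x) b a).trans ?_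
    gcongr
  rw [pathPA_eq_exp_mul_pathPA π ha x fun i j _ => hb i j, mul_comm c, mul_assoc]
  refine (mul_le_mul_of_nonneg_left (mul_pathPA_le_pathPA hμπ (fun i j => (hb i j).le) x)
    (Real.exp_nonneg _)).trans (mul_le_mul_of_nonneg_right (Real.exp_le_exp.2 ?_)
    (pathPA_nonneg hπ (fun i j => (hb i j).le) x))
  rw [neg_mul, neg_mul, neg_le_neg_iff]
  exact mul_le_mul_of_nonneg_left hrate (by positivity)

lemma mul_prEventNC_le_prEventNC {m : ℕ} {μ : Fin n → ℝ} {c : ℝ}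
    {Γ' : Set (Fin n → Fin n → ℝ)} (hΓ : ∀ ξ ∈ Γ', ξ ∈ simplex2 n → ξ ∈ Γ)
    (hπ : ∀ i, 0 ≤ π i) (ha : ∀ i j, 0 ≤ a i j)
    (h : ∀ x : Fin (m+2) → Fin n, empNC x ∈ Γ' → c * pathPA μ b x ≤ pathPA π a x) :
    c * prEventNC μ b m Γ' ≤ prEventNC π a m Γ := by
  rw [prEventNC, prEventNC, mul_sum]
  refine sum_le_sum fun x _ => ?_
  by_cases hx : empNC x ∈ Γ'
  · simpa [hx, hΓ _ hx (empNC_mem_simplex2 x)] using h x hx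
  · rw [if_neg hx, mul_zero]
    split_ifs
    exacts [pathPA_nonneg hπ ha x, le_rfl]

lemma le_liminf_logProbRate {C K : ℝ} (hC : 0 < C)
    (h : ∀ᶠ m : ℕ in atTop, C * Real.exp (-((m:ℝ)+1) * K) ≤ prEventNC π a m Γ) :
    ((-K : ℝ) : EReal) ≤ liminf (logProbRate π a Γ) atTop := by
  have hr : Tendsto (fun m : ℕ => ((m:ℝ)+2)⁻¹ * (Real.log C - ((m:ℝ)+1) * K)) atTop (𝓝 (-K)) := by
    have hinv := (tendsto_inv_atTop_zero.comp (tendsto_atTop_add_const_right atTop (2:ℝ)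
      tendsto_natCast_atTop_atTop)).const_mul (Real.log C + K)
    rw [mul_zero] at hinv
    rw [← add_zero (-K)]
    refine (hinv.const_add (-K)).congr fun m => ?_
    simp only [Function.comp_apply]
    field_simp
    ring
  refine (EReal.tendsto_coe.2 hr).liminf_eq.symm.le.trans (liminf_le_liminf ?_)
  filter_upwards [h] with m hm
  have hpos : 0 < C * Real.exp (-((m:ℝ)+1) * K) := by positivity
  rw [logProbRate, coe_mul_elog_of_pos _ (hpos.trans_le hm), EReal.coe_le_coe_iff]
  refine mul_le_mul_of_nonneg_left ?_ (by positivity)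
  calc Real.log C - ((m:ℝ)+1) * K = Real.log (C * Real.exp (-((m:ℝ)+1) * K)) := by
        rw [Real.log_mul hC.ne' (Real.exp_pos _).ne', Real.log_exp]
        ring
    _ ≤ Real.log (prEventNC π a m Γ) := Real.log_le_log hpos hm

/-- Tilting to the kernel `b = condKernel a θ`, whose stationary doublet law is `θ`: typical
`b`-paths have empirical measure near `θ`, and along them `dP_a/dP_b ≈ exp (-(m+1) I_a(θ))`. -/
lemma le_liminf_logProbRate_of_pos (hπ : ∀ i, 0 < π i) (ha : ∀ i j, 0 < a i j)
    (harow : ∀ i, ∑ j, a i j = 1) (hop : OpenIn2 (simplex2 n) Γ) (hθΓ : θ ∈ Γ)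
    (hθpos : ∀ i j, 0 < θ i j) (hθ : θ ∈ simplex2 n) (hstat : IsStat2 θ)
    {η : ℝ} (hη : 0 < η) :
    ((-(relEntropyRate a θ + η) : ℝ) : EReal) ≤ liminf (logProbRate π a Γ) atTop := by
  set b := condKernel a θ
  have hb : ∀ i j, 0 < b i j := fun i j => condKernel_pos hθ.1 (hθpos i j)
  obtain ⟨ε, hε, hball⟩ := hop θ hθΓ
  set C := ∑ i, ∑ j, |Real.log (b i j / a i j)|
  set δ := min ε (η / (C + 1))
  have hδ : 0 < δ := lt_min hε (by positivity)
  have hCδ : C * δ ≤ η := by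
    have hC : 0 ≤ C := by positivity
    calc C * δ ≤ C * (η / (C + 1)) := mul_le_mul_of_nonneg_left (min_le_right _ _) hC
      _ ≤ η := by rw [mul_div_assoc', div_le_iff₀ (by positivity)]; nlinarith
  obtain ⟨c, hc, hcμ⟩ := exists_pos_mul_le hπ (marg θ)
  refine le_liminf_logProbRate (C := c / 2) (by positivity) ?_
  filter_upwards [eventually_half_le_prEventNC_ball hb (sum_condKernel harow) hθ
    (marg_mul_condKernel hθ.1) hstat hδ] with m hm
  have hexp : Real.exp (-((m:ℝ)+1) * (relEntropyRate a θ + η))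
      ≤ Real.exp (-((m:ℝ)+1) * (logRatioSum θ b a + C * δ)) := by
    rw [Real.exp_le_exp, neg_mul, neg_mul, neg_le_neg_iff]
    exact mul_le_mul_of_nonneg_left (add_le_add le_rfl hCδ) (by positivity)
  calc c / 2 * Real.exp (-((m:ℝ)+1) * (relEntropyRate a θ + η))
      ≤ c * Real.exp (-((m:ℝ)+1) * (logRatioSum θ b a + C * δ)) * (1/2) := by nlinarith
    _ ≤ c * Real.exp (-((m:ℝ)+1) * (logRatioSum θ b a + C * δ))
          * prEventNC (marg θ) b m {ξ | dist2v ξ θ < δ} :=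
        mul_le_mul_of_nonneg_left hm (by positivity)
    _ ≤ prEventNC π a m Γ :=
        mul_prEventNC_le_prEventNC (fun ξ hξ hξS => hball ξ hξS (hξ.trans_le (min_le_left _ _)))
          (fun i => (hπ i).le) (fun i j => (ha i j).le)
          fun x hx => mul_exp_mul_pathPA_le (fun i => (hπ i).le) ha hb hcμ hx

lemma exists_pos_isStat2_near (ha : ∀ i j, 0 < a i j) {u : Fin n → Fin n → ℝ}
    (hθ : θ ∈ simplex2 n) (hstat : IsStat2 θ) (hupos : ∀ i j, 0 < u i j) (hu : u ∈ simplex2 n)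
    (hustat : IsStat2 u) {ε η : ℝ} (hε : 0 < ε) (hη : 0 < η) :
    ∃ ξ, (∀ i j, 0 < ξ i j) ∧ ξ ∈ simplex2 n ∧ IsStat2 ξ ∧ dist2v ξ θ < ε ∧
      relEntropyRate a ξ < relEntropyRate a θ + η := by
  set seg : ℝ → Fin n → Fin n → ℝ := fun t => (1 - t) • θ + t • u
  have hseg : ∀ t i j, seg t i j = (1 - t) * θ i j + t * u i j := fun _ _ _ => rfl
  have hsegpos : ∀ t ∈ Set.Ioo (0:ℝ) 1, ∀ i j, 0 < seg t i j := fun t ht i j => by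
    rw [hseg]
    nlinarith [hθ.1 i j, hupos i j, ht.1, ht.2]
  have hlim : Tendsto seg (𝓝[>] 0) (𝓝 θ) :=
    ((by fun_prop : Continuous seg).tendsto' 0 θ (by simp [seg])).mono_left nhdsWithin_le_nhds
  have hIoo : ∀ᶠ t in 𝓝[>] (0:ℝ), t ∈ Set.Ioo 0 1 := Ioo_mem_nhdsGT one_pos
  have hdist : ∀ᶠ t in 𝓝[>] (0:ℝ), dist2v (seg t) θ < ε :=
    (((continuous_dist2v θ).tendsto θ).comp hlim).eventually
      (eventually_lt_nhds (by rwa [dist2v_self]))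
  have hrate : ∀ᶠ t in 𝓝[>] (0:ℝ), relEntropyRate a (seg t) < relEntropyRate a θ + η :=
    (((continuousOn_relEntropyRate ha θ hθ.1).tendsto).comp (tendsto_nhdsWithin_iff.2
      ⟨hlim, hIoo.mono fun t ht i j => (hsegpos t ht i j).le⟩)).eventually
      (eventually_lt_nhds (by linarith))
  obtain ⟨t, ht, htd, htr⟩ := (hIoo.and (hdist.and hrate)).exists
  refine ⟨seg t, hsegpos t ht, ⟨fun i j => (hsegpos t ht i j).le, ?_⟩, fun i => ?_, htd, htr⟩
  · simp only [hseg, sum_add_distrib, ← mul_sum, hθ.2, hu.2]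
    ring
  · simp only [hseg, sum_add_distrib, ← mul_sum, hstat i, hustat i]

lemma mul_mem_simplex2 (hπ : (∀ i, 0 ≤ π i) ∧ ∑ i, π i = 1) (ha : ∀ i j, 0 ≤ a i j)
    (harow : ∀ i, ∑ j, a i j = 1) : (fun i j => π i * a i j) ∈ simplex2 n :=
  ⟨fun i j => mul_nonneg (hπ.1 i) (ha i j), by simp only [← mul_sum, harow, mul_one, hπ.2]⟩

lemma isStat2_mul (harow : ∀ i, ∑ j, a i j = 1) (hinv : ∀ j, ∑ i, π i * a i j = π j) :
    IsStat2 fun i j => π i * a i j := fun i => by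
  rw [← mul_sum, harow, mul_one, hinv]

theorem neg_iInf_rate16_le_liminf (hπ : (∀ i, 0 ≤ π i) ∧ ∑ i, π i = 1)
    (ha : ∀ i j, 0 < a i j) (harow : ∀ i, ∑ j, a i j = 1) (hinv : ∀ j, ∑ i, π i * a i j = π j)
    (hΓ : Γ ⊆ simplex2 n) (hop : OpenIn2 (simplex2 n) Γ) :
    -(⨅ θ ∈ Γ, rate16 a θ) ≤ liminf (logProbRate π a Γ) atTop := by
  rw [EReal.neg_le]
  refine le_iInf₂ fun θ hθΓ => ?_
  rw [EReal.neg_le]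
  by_cases hstat : IsStat2 θ
  swap
  · simp [rate16, hstat]
  rw [rate16_eq_relEntropyRate (hΓ hθΓ).1 hstat, ← EReal.coe_neg]
  refine EReal.ge_of_forall_gt_iff_ge.1 fun z hz => ?_
  have hη : 0 < (-relEntropyRate a θ - z) / 2 := by
    rw [EReal.coe_lt_coe_iff] at hz
    linarith
  have hπpos := pos_of_isInvariant hπ.1 (hπ.2 ▸ one_ne_zero) ha hinv
  obtain ⟨ε, hε, hball⟩ := hop θ hθΓ
  obtain ⟨ξ, hξpos, hξ, hξstat, hξd, hξr⟩ := exists_pos_isStat2_near ha (hΓ hθΓ) hstat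
    (fun i j => mul_pos (hπpos i) (ha i j)) (mul_mem_simplex2 hπ (fun i j => (ha i j).le) harow)
    (isStat2_mul harow hinv) hε hη
  refine le_trans ?_ (le_liminf_logProbRate_of_pos hπpos ha harow hop (hball ξ hξ hξd) hξpos hξ
    hξstat hη)
  rw [EReal.coe_le_coe_iff]
  linarith

end LowerBound

end DoubletLDP

/-- For a stationary Markov chain with transition matrix
`a_{ij} > 0` and stationary distribution `π`, the non-cyclic empirical doublet measures
`θ(x_1^l) ∈ S_{n²}` satisfy the LDP with rate function
`I(θ) = Σ_i θ̄_i Σ_j b_{ij} log(b_{ij}/a_{ij})` for `θ ∈ M_s(A²)` and `I(θ) = +∞`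
for `θ ∈ S_{n²} \ M_s(A²)`. -/
theorem stmt16 {n : ℕ} (π : Fin n → ℝ) (a : Fin n → Fin n → ℝ)
    (hπ : (∀ i, 0 ≤ π i) ∧ ∑ i, π i = 1)
    (hapos : ∀ i j, 0 < a i j) (harow : ∀ i, ∑ j, a i j = 1)
    (hinv : ∀ j, ∑ i, π i * a i j = π j) :
    (∀ Γ : Set (Fin n → Fin n → ℝ), Γ ⊆ simplex2 n → OpenIn2 (simplex2 n) Γ →
      -(⨅ θ ∈ Γ, rate16 a θ)
        ≤ Filter.liminf
            (fun m : ℕ => ((((m:ℝ)+2)⁻¹ : ℝ) : EReal) * elog (prEventNC π a m Γ))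
            Filter.atTop) ∧
    (∀ Γ : Set (Fin n → Fin n → ℝ), Γ ⊆ simplex2 n → ClosedIn2 (simplex2 n) Γ →
      Filter.limsup
          (fun m : ℕ => ((((m:ℝ)+2)⁻¹ : ℝ) : EReal) * elog (prEventNC π a m Γ))
          Filter.atTop
        ≤ -(⨅ θ ∈ Γ, rate16 a θ)) := by
  refine ⟨fun Γ hΓ hop => DoubletLDP.neg_iInf_rate16_le_liminf hπ hapos harow hinv hΓ hop,
    fun Γ hΓ hcl => ?_⟩
  have h := DoubletLDP.limsup_logProbRate_le hπ hapos harow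
    (DoubletLDP.isClosed_of_closedIn2 hcl DoubletLDP.isClosed_simplex2 hΓ)
  rwa [Set.inter_eq_left.2 hΓ] at h
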